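/- If a play satisfies DirBWMP(0) then it satisfies the total-payoff objective TP(0): let w : ℕ → ℝ and suppose there exists an integer ℓ ≥ 1 such that for every i ∈ ℕ there exists d with 1 ≤ d ≤ ℓ and S(i,i+d) ≥ 0. Then there are infinitely many n ∈ ℕ with S(0,n) ≥ 0; in particular limsup_{n→∞} S(0,n) ≥ 0. -/

import Mathlib

/-!
Every position `i` opens a window that closes with nonnegative payoff at some `i + d`, `d ≥ 1`.
Chaining these windows from position `0` gives arbitrarily long prefixes of nonnegative total
payoff, and a sequence that is frequently nonnegative has nonnegative limsup.
-/

open scoped Classical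

/-- `infixSum w i j = S(i,j) = Σ_{t=i}^{j-1} w t`, the total payoff of the
infix `(i, j)` of the payoff sequence `w`. -/
def infixSum (w : ℕ → ℝ) (i j : ℕ) : ℝ :=
  ∑ t ∈ Finset.Ico i j, w t

open Filter

theorem infixSum_add_infixSum (w : ℕ → ℝ) {i j k : ℕ} (hij : i ≤ j) (hjk : j ≤ k) :
    infixSum w i j + infixSum w j k = infixSum w i k :=
  Finset.sum_Ico_consecutive w hij hjk

theorem frequently_infixSum_zero_nonneg {w : ℕ → ℝ}
    (h : ∀ i, ∃ d, 1 ≤ d ∧ 0 ≤ infixSum w i (i + d)) :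
    ∃ᶠ n in atTop, 0 ≤ infixSum w 0 n := by
  rw [frequently_atTop]
  intro N
  induction N with
  | zero => exact ⟨0, le_rfl, by simp [infixSum]⟩
  | succ N ih =>
    obtain ⟨n, hNn, hn⟩ := ih
    obtain ⟨d, hd, hwindow⟩ := h n
    refine ⟨n + d, by omega, ?_⟩
    rw [← infixSum_add_infixSum w (Nat.zero_le n) (Nat.le_add_right n d)]
    exact add_nonneg hn hwindow

/-- Unlike `Filter.le_limsup_of_frequently_le`, no boundedness is needed: if `u` is not eventually
bounded above, then `limsup u f = sInf ∅ = 0`. -/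
theorem Real.limsup_nonneg_of_frequently_nonneg {α : Type*} {f : Filter α} {u : α → ℝ}
    (h : ∃ᶠ x in f, 0 ≤ u x) : 0 ≤ limsup u f := by
  rw [limsup_eq]
  refine Real.sInf_nonneg fun a ha => ?_
  obtain ⟨x, hx, hxa⟩ := (h.and_eventually ha).exists
  exact hx.trans hxa

/-- If a payoff sequence satisfies `DirBWMP(0)` then it satisfies the
total-payoff objective `TP(0)`: there are infinitely many `n` with
`S(0,n) ≥ 0`, and in particular `limsup_{n→∞} S(0,n) ≥ 0`. -/
theorem dirbwmp_implies_total_payoff (w : ℕ → ℝ)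
    (h : ∃ ℓ : ℕ, 1 ≤ ℓ ∧ ∀ i : ℕ, ∃ d : ℕ, 1 ≤ d ∧ d ≤ ℓ ∧ 0 ≤ infixSum w i (i + d)) :
    (∀ N : ℕ, ∃ n : ℕ, N ≤ n ∧ 0 ≤ infixSum w 0 n) ∧
    0 ≤ Filter.limsup (fun n : ℕ => infixSum w 0 n) Filter.atTop := by
  obtain ⟨ℓ, -, hwindow⟩ := h
  have hfreq := frequently_infixSum_zero_nonneg fun i =>
    (hwindow i).imp fun _ ⟨hd, _, hS⟩ => ⟨hd, hS⟩
  exact ⟨frequently_atTop.mp hfreq, Real.limsup_nonneg_of_frequently_nonneg hfreq⟩
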